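/- Let B be a nondegenerate ε-symmetric K-bilinear form on V, and let L be a lattice with dual lattice L' = {x ∈ V : B(x,y) ∈ R for all y ∈ L}. Then the dual of the lattice m₋(L,L') is m₊(L,L'), and m₋(L,L') is almost self-dual, i.e., π·(m₋(L,L'))' ⊆ m₋(L,L') ⊆ (m₋(L,L'))'. -/

import Mathlib

open scoped Pointwise

variable {R K V : Type*} [CommRing R] [IsDomain R] [IsDiscreteValuationRing R]
  [Field K] [Algebra R K] [IsFractionRing R K]
  [AddCommGroup V] [Module K V] [Module R V] [IsScalarTower R K V]
  [FiniteDimensional K V]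

/-- A lattice in `V` is a finitely generated `R`-submodule spanning `V` over `K`. -/
def IsLattice (K : Type*) [Field K] [Algebra R K] [Module K V] (L : Submodule R V) : Prop :=
  L.FG ∧ Submodule.span K (L : Set V) = ⊤

/-- `πⁿ L`, for `n ∈ ℤ` (via the embedding of `π` in `K`). -/
noncomputable def latTwist (π : R) (n : ℤ) (L : Submodule R V) : Submodule R V :=
  ((algebraMap R K π) ^ n) • L

/-- The lower middle `m₋(L,M) = ∑ₙ (πⁿL ∩ π⁻ⁿM)`. -/
noncomputable def lowerMiddle (π : R) (L M : Submodule R V) : Submodule R V :=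
  ⨆ n : ℤ, (latTwist (K := K) π n L ⊓ latTwist (K := K) π (-n) M)

/-- The upper middle `m₊(L,M) = ⋂ₙ (πⁿL + π⁻ⁿM)`. -/
noncomputable def upperMiddle (π : R) (L M : Submodule R V) : Submodule R V :=
  ⨅ n : ℤ, (latTwist (K := K) π n L ⊔ latTwist (K := K) π (-n) M)

/-- The dual lattice `L' = {x ∈ V : B(x,y) ∈ R for all y ∈ L}`. -/
def dualLattice (B : V →ₗ[K] V →ₗ[K] K) (L : Submodule R V) : Submodule R V where
  carrier := {x | ∀ y ∈ L, B x y ∈ (algebraMap R K).range}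
  add_mem' := by
    intro a b ha hb y hy
    rw [map_add, LinearMap.add_apply]
    exact add_mem (ha y hy) (hb y hy)
  zero_mem' := by
    intro y hy
    rw [map_zero, LinearMap.zero_apply]
    exact zero_mem _
  smul_mem' := by
    intro r x hx y hy
    rw [← algebraMap_smul K r x, map_smul, LinearMap.smul_apply, smul_eq_mul]
    obtain ⟨s, hs⟩ := hx y hy
    exact ⟨r * s, by rw [map_mul, hs]⟩

/-!
Write `Pₙ = πⁿL ∩ π⁻ⁿL'` and `Qₙ = πⁿL + π⁻ⁿL'`. For lattices, duality is an inclusion-reversing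
involution (`L'' = L`) that turns sums into intersections and back, and `(πⁿL)' = π⁻ⁿL'`; hence
`Pₙ' = Qₙ` and `m₋' = ⋂ₙ Pₙ' = m₊`. As `πⁿL` shrinks and `π⁻ⁿL'` grows with `n`, every `Pₙ` lies
in every `Qₘ`, so `m₋ ⊆ m₊ = m₋'`. Finally, if `x ∈ m₊`, write `x = aₙ + bₙ` with `aₙ ∈ πⁿL` and
`bₙ ∈ π⁻ⁿL'`. The differences `aₙ - aₙ₊₁ = bₙ₊₁ - bₙ` lie in `πⁿL ∩ π⁻ⁿ⁻¹L'`, which `π` maps into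
`Pₙ₊₁`, and `x` is their telescoping sum between an index where `x ∈ πⁿL` and one where
`x ∈ π⁻ⁿL'`; hence `πx ∈ m₋`.
-/

theorem Submodule.mem_iSup_inf_of_forall_mem_sup {A M : Type*} [Ring A] [AddCommGroup M]
    [Module A M] {P Q : ℤ → Submodule A M} (hP : Antitone P) (hQ : Monotone Q) {x : M}
    {a b : ℤ} (ha : x ∈ P a) (hb : x ∈ Q b) (hx : ∀ n, x ∈ P n ⊔ Q n) :
    x ∈ ⨆ n, P n ⊓ Q (n + 1) := by
  set S := ⨆ n, P n ⊓ Q (n + 1)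
  have hmem : ∀ n, a ≤ n → x ∈ P n ⊔ (Q n ⊓ S) := by
    refine Int.leInduction (Submodule.mem_sup_left ha) fun n _ ih => ?_
    obtain ⟨y, hy, z, ⟨hzQ, hzS⟩, hyz⟩ := Submodule.mem_sup.mp ih
    obtain ⟨y', hy', z', hz', hyz'⟩ := Submodule.mem_sup.mp (hx (n + 1))
    have hdiff : y - y' = z' - z := by
      rw [sub_eq_sub_iff_add_eq_add, hyz, ← hyz', add_comm]
    have hdiffS : y - y' ∈ S := Submodule.mem_iSup_of_mem n
      ⟨sub_mem hy (hP (lt_add_one n).le hy'), hdiff ▸ sub_mem hz' (hQ (lt_add_one n).le hzQ)⟩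
    refine Submodule.mem_sup.mpr ⟨y', hy', z + (y - y'), ⟨?_, add_mem hzS hdiffS⟩, ?_⟩
    · rwa [hdiff, add_sub_cancel]
    · rw [hdiff, add_sub_cancel, hyz']
  obtain ⟨y, hy, z, ⟨hzQ, hzS⟩, rfl⟩ := Submodule.mem_sup.mp (hmem (max a b) (le_max_left a b))
  have hyQ : y ∈ Q (max a b) := by
    simpa using sub_mem (hQ (le_max_right a b) hb) hzQ
  exact add_mem (Submodule.mem_iSup_of_mem (max a b) ⟨hy, hQ (lt_add_one _).le hyQ⟩) hzS

section Twist

omit [IsDomain R] [IsDiscreteValuationRing R] [IsFractionRing R K] [FiniteDimensional K V]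

variable {π : R}

theorem mem_latTwist (hπ : algebraMap R K π ≠ 0) {n : ℤ} {L : Submodule R V} {x : V} :
    x ∈ latTwist (K := K) π n L ↔ (algebraMap R K π ^ (-n)) • x ∈ L := by
  rw [zpow_neg]
  exact Set.mem_smul_set_iff_inv_smul_mem₀ (zpow_ne_zero _ hπ) _ _

theorem latTwist_mono (n : ℤ) : Monotone (latTwist (K := K) (V := V) π n) :=
  fun _ _ h => Submodule.map_mono h

theorem latTwist_one (L : Submodule R V) : latTwist (K := K) π 1 L = algebraMap R K π • L := by
  rw [latTwist, zpow_one]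

theorem latTwist_latTwist (hπ : algebraMap R K π ≠ 0) (m n : ℤ) (L : Submodule R V) :
    latTwist (K := K) π m (latTwist (K := K) π n L) = latTwist (K := K) π (m + n) L := by
  rw [latTwist, latTwist, latTwist, smul_smul, zpow_add₀ hπ]

theorem latTwist_natCast_le (k : ℕ) (L : Submodule R V) : latTwist (K := K) π k L ≤ L := by
  rintro _ ⟨y, hy, rfl⟩
  show algebraMap R K π ^ (k : ℤ) • y ∈ L
  rw [zpow_natCast, ← map_pow, algebraMap_smul]
  exact L.smul_mem _ hy

theorem latTwist_antitone (hπ : algebraMap R K π ≠ 0) (L : Submodule R V) :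
    Antitone fun n => latTwist (K := K) π n L := by
  intro m n hmn
  obtain ⟨k, rfl⟩ := Int.le.dest hmn
  show latTwist π (m + k) L ≤ latTwist π m L
  rw [← latTwist_latTwist hπ]
  exact latTwist_mono m (latTwist_natCast_le k L)

theorem isLattice_latTwist (hπ : algebraMap R K π ≠ 0) (n : ℤ) (L : Submodule R V)
    [L.IsLattice K] : (latTwist (K := K) π n L).IsLattice K := by
  have : latTwist (K := K) π n L = (Units.mk0 _ hπ ^ n) • L := by
    rw [latTwist, Units.smul_def, Units.val_zpow_eq_zpow_val, Units.val_mk0]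
  rw [this]
  infer_instance

theorem lowerMiddle_le_upperMiddle (hπ : algebraMap R K π ≠ 0) (L M : Submodule R V) :
    lowerMiddle (K := K) π L M ≤ upperMiddle (K := K) π L M :=
  iSup_le fun n => le_iInf fun m => by
    rcases le_total n m with h | h
    · exact inf_le_right.trans <| (latTwist_antitone hπ M (neg_le_neg h)).trans le_sup_right
    · exact inf_le_left.trans <| (latTwist_antitone hπ L h).trans le_sup_left

end Twist

section Duality

omit [IsDomain R] [IsDiscreteValuationRing R] [IsFractionRing R K] [FiniteDimensional K V]

variable {B : V →ₗ[K] V →ₗ[K] K}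

theorem dualLattice_eq_dualSubmodule (N : Submodule R V) :
    dualLattice B N = LinearMap.BilinForm.dualSubmodule B N := by
  ext x
  simp only [LinearMap.BilinForm.mem_dualSubmodule, Submodule.mem_one]
  rfl

theorem le_dualLattice_flip_iff {N₁ N₂ : Submodule R V} :
    N₁ ≤ dualLattice B.flip N₂ ↔ N₂ ≤ dualLattice B N₁ :=
  ⟨fun h _ hx _ hy => h hy _ hx, fun h _ hx _ hy => h hy _ hx⟩

variable (B) in
theorem gc_dualLattice :
    GaloisConnection (OrderDual.toDual ∘ dualLattice (R := R) B)
      (dualLattice B.flip ∘ OrderDual.ofDual) :=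
  fun _ _ => le_dualLattice_flip_iff.symm

theorem dualLattice_sup (M N : Submodule R V) :
    dualLattice B (M ⊔ N) = dualLattice B M ⊓ dualLattice B N :=
  (gc_dualLattice (R := R) B).l_sup (a₁ := M) (a₂ := N)

theorem dualLattice_iSup {ι : Sort*} (N : ι → Submodule R V) :
    dualLattice B (⨆ i, N i) = ⨅ i, dualLattice B (N i) :=
  (gc_dualLattice B).l_iSup

theorem dualLattice_latTwist {π : R} (hπ : algebraMap R K π ≠ 0) (n : ℤ) (L : Submodule R V) :
    dualLattice B (latTwist (K := K) π n L) = latTwist (K := K) π (-n) (dualLattice B L) := by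
  ext x
  have hB : ∀ y, B x (algebraMap R K π ^ n • y) = B (algebraMap R K π ^ n • x) y := by simp
  rw [mem_latTwist hπ, neg_neg]
  constructor
  · exact fun h y hy => hB y ▸ h _ (Submodule.smul_mem_pointwise_smul _ _ _ hy)
  · rintro h _ ⟨y, hy, rfl⟩
    exact (hB y).symm ▸ h y hy

theorem dualLattice_flip {ε : K} (hε : ε = 1 ∨ ε = -1) (hsymm : ∀ x y : V, B x y = ε * B y x)
    (N : Submodule R V) : dualLattice B.flip N = dualLattice B N := by
  ext x
  refine forall₂_congr fun y _ => ?_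
  rw [LinearMap.flip_apply, hsymm y x]
  rcases hε with rfl | rfl
  · rw [one_mul]
  · rw [neg_one_mul, neg_mem_iff]

theorem isLattice_span_basis {ι : Type*} [Finite ι] (b : Module.Basis ι K V) :
    (Submodule.span R (Set.range b)).IsLattice K :=
  ⟨Submodule.fg_span (Set.finite_range b), by rw [Submodule.span_span_of_tower, b.span_eq]⟩

end Duality

section LatticeDuality

omit [IsDiscreteValuationRing R] [FiniteDimensional K V]

omit [IsDomain R] in
theorem span_range_extendOfIsLattice {κ : Type*} (L : Submodule R V) [L.IsLattice K]
    (b : Module.Basis κ R L) : Submodule.span R (Set.range (b.extendOfIsLattice K)) = L := by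
  have : Set.range (b.extendOfIsLattice K) = L.subtype '' Set.range b := by
    rw [← Set.range_comp]
    exact congrArg Set.range (funext (b.extendOfIsLattice_apply K))
  rw [this, ← Submodule.map_span, b.span_eq, Submodule.map_top, Submodule.range_subtype]

variable [IsPrincipalIdealRing R] {B : V →ₗ[K] V →ₗ[K] K}

theorem isLattice_dualLattice (hB : B.Nondegenerate) (L : Submodule R V) [L.IsLattice K] :
    (dualLattice B L).IsLattice K := by
  classical
  rw [← span_range_extendOfIsLattice L (Module.Free.chooseBasis R L), dualLattice_eq_dualSubmodule,
    LinearMap.BilinForm.dualSubmodule_span_of_basis B hB]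
  exact isLattice_span_basis _

theorem dualLattice_dualLattice (hB : B.Nondegenerate) {ε : K} (hε : ε = 1 ∨ ε = -1)
    (hsymm : ∀ x y : V, B x y = ε * B y x) (L : Submodule R V) [L.IsLattice K] :
    dualLattice B (dualLattice B L) = L := by
  obtain ⟨b, hb⟩ : ∃ b : Module.Basis _ K V, Submodule.span R (Set.range b) = L :=
    ⟨_, span_range_extendOfIsLattice L (Module.Free.chooseBasis R L)⟩
  rw [← hb, ← dualLattice_flip hε hsymm (Submodule.span R (Set.range b)),
    dualLattice_eq_dualSubmodule, dualLattice_eq_dualSubmodule]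
  exact LinearMap.BilinForm.dualSubmodule_dualSubmodule_flip_of_basis B hB b

theorem dualLattice_inf (hB : B.Nondegenerate) {ε : K} (hε : ε = 1 ∨ ε = -1)
    (hsymm : ∀ x y : V, B x y = ε * B y x) (M N : Submodule R V) [M.IsLattice K]
    [N.IsLattice K] : dualLattice B (M ⊓ N) = dualLattice B M ⊔ dualLattice B N := by
  have := isLattice_dualLattice hB M
  have := isLattice_dualLattice hB N
  calc dualLattice B (M ⊓ N)
      = dualLattice B (dualLattice B (dualLattice B M) ⊓ dualLattice B (dualLattice B N)) := by
        rw [dualLattice_dualLattice hB hε hsymm M, dualLattice_dualLattice hB hε hsymm N]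
    _ = dualLattice B (dualLattice B (dualLattice B M ⊔ dualLattice B N)) := by
        rw [dualLattice_sup]
    _ = dualLattice B M ⊔ dualLattice B N := dualLattice_dualLattice hB hε hsymm _

theorem dualLattice_lowerMiddle_eq_upperMiddle {π : R} (hπ : algebraMap R K π ≠ 0)
    (hB : B.Nondegenerate) {ε : K} (hε : ε = 1 ∨ ε = -1) (hsymm : ∀ x y : V, B x y = ε * B y x)
    (L : Submodule R V) [L.IsLattice K] :
    dualLattice B (lowerMiddle (K := K) π L (dualLattice B L)) =
      upperMiddle (K := K) π L (dualLattice B L) := by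
  have := isLattice_dualLattice hB L
  have := isLattice_latTwist (V := V) hπ
  rw [lowerMiddle, dualLattice_iSup, upperMiddle]
  refine iInf_congr fun n => ?_
  rw [dualLattice_inf hB hε hsymm, dualLattice_latTwist hπ, dualLattice_latTwist hπ, neg_neg,
    dualLattice_dualLattice hB hε hsymm, sup_comm]

end LatticeDuality

section Uniformizer

omit [FiniteDimensional K V]

variable {π : R}

omit [IsDiscreteValuationRing R] in
theorem Irreducible.algebraMap_ne_zero (hπ : Irreducible π) : algebraMap R K π ≠ 0 :=
  IsFractionRing.to_map_ne_zero_of_mem_nonZeroDivisors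
    (mem_nonZeroDivisors_of_ne_zero hπ.ne_zero)

theorem exists_mem_latTwist (hπ : Irreducible π) {L : Submodule R V}
    (hL : Submodule.span K (L : Set V) = ⊤) (x : V) : ∃ n : ℤ, x ∈ latTwist (K := K) π n L := by
  obtain ⟨⟨t, ht⟩, htx⟩ := multiple_mem_span_of_mem_localization_span (nonZeroDivisors R) K
    (L : Set V) x (hL ▸ Submodule.mem_top)
  obtain ⟨k, u, rfl⟩ :=
    IsDiscreteValuationRing.eq_unit_mul_pow_irreducible (nonZeroDivisors.ne_zero ht) hπ
  refine ⟨-k, (mem_latTwist hπ.algebraMap_ne_zero).mpr ?_⟩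
  rw [neg_neg, zpow_natCast, ← map_pow, algebraMap_smul]
  rw [Submonoid.smul_def, Submodule.span_eq, mul_smul] at htx
  simpa using L.smul_mem (↑u⁻¹ : R) htx

theorem smul_upperMiddle_le_lowerMiddle (hπ : Irreducible π) {L M : Submodule R V}
    (hL : Submodule.span K (L : Set V) = ⊤) (hM : Submodule.span K (M : Set V) = ⊤) :
    algebraMap R K π • upperMiddle (K := K) π L M ≤ lowerMiddle (K := K) π L M := by
  have hc : algebraMap R K π ≠ 0 := hπ.algebraMap_ne_zero
  rintro _ ⟨x, hx, rfl⟩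
  obtain ⟨a, ha⟩ := exists_mem_latTwist hπ hL x
  obtain ⟨b, hb⟩ := exists_mem_latTwist hπ hM x
  have hxS := Submodule.mem_iSup_inf_of_forall_mem_sup (P := fun n => latTwist (K := K) π n L)
    (Q := fun n => latTwist (K := K) π (-n) M) (latTwist_antitone hc L)
    (fun m n h => latTwist_antitone hc M (neg_le_neg h)) ha (b := -b) (by rwa [neg_neg])
    (Submodule.mem_iInf _ |>.mp hx)
  refine SetLike.le_def.mp ?_ (Submodule.smul_mem_pointwise_smul _ (algebraMap R K π) _ hxS)
  rw [Submodule.smul_iSup']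
  refine iSup_le fun n => le_iSup_of_le (n + 1) (le_inf ?_ ?_)
  · calc _ ≤ algebraMap R K π • latTwist (K := K) π n L := smul_mono_right _ inf_le_left
      _ = latTwist (K := K) π (n + 1) L := by rw [← latTwist_one, latTwist_latTwist hc, add_comm]
  · calc _ ≤ algebraMap R K π • latTwist (K := K) π (-(n + 1)) M := smul_mono_right _ inf_le_right
      _ = latTwist (K := K) π (-n) M := by
        rw [← latTwist_one, latTwist_latTwist hc]
        congr 1
        ring
      _ ≤ latTwist (K := K) π (-(n + 1)) M := latTwist_antitone hc M (by omega)

end Uniformizer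

/-- `m₋(L,L')` has dual lattice `m₊(L,L')`, and it is almost self-dual:
`π·(m₋(L,L'))' ⊆ m₋(L,L') ⊆ (m₋(L,L'))'`. -/
theorem dual_lowerMiddle (π : R) (hπ : Irreducible π)
    (B : V →ₗ[K] V →ₗ[K] K) (ε : K) (hε : ε = 1 ∨ ε = -1)
    (hsymm : ∀ x y : V, B x y = ε * B y x)
    (hnd : ∀ x : V, (∀ y : V, B x y = 0) → x = 0)
    (L : Submodule R V) (hL : IsLattice K L) :
    dualLattice B (lowerMiddle (K := K) π L (dualLattice B L)) =
        upperMiddle (K := K) π L (dualLattice B L) ∧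
    (algebraMap R K π) • dualLattice B (lowerMiddle (K := K) π L (dualLattice B L)) ≤
        lowerMiddle (K := K) π L (dualLattice B L) ∧
    lowerMiddle (K := K) π L (dualLattice B L) ≤
        dualLattice B (lowerMiddle (K := K) π L (dualLattice B L)) := by
  have hc : algebraMap R K π ≠ 0 := hπ.algebraMap_ne_zero
  have hB : B.Nondegenerate := ⟨hnd, fun y hy => hnd y fun x => by rw [hsymm, hy x, mul_zero]⟩
  have : L.IsLattice K := ⟨hL.1, hL.2⟩
  have hdual := dualLattice_lowerMiddle_eq_upperMiddle hc hB hε hsymm L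
  refine ⟨hdual, ?_, ?_⟩ <;> rw [hdual]
  · exact smul_upperMiddle_le_lowerMiddle hπ hL.2 (isLattice_dualLattice hB L).span_eq_top
  · exact lowerMiddle_le_upperMiddle hc _ _
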